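/- Let Z ~ N(m, σ²) with σ > 0 and z_min ∈ ℝ, and define the improvement I = max(z_min − Z, 0). Then E[I] = (z_min − m)·Φ((z_min − m)/σ) + σ·φ((z_min − m)/σ), where φ and Φ are the standard normal PDF and CDF. -/

import Mathlib

open MeasureTheory ProbabilityTheory Real

noncomputable def stdNormalPdf (v : ℝ) : ℝ :=
  (Real.sqrt (2 * Real.pi))⁻¹ * Real.exp (-v ^ 2 / 2)

noncomputable def stdNormalCdf (a : ℝ) : ℝ :=
  ∫ v in Set.Iic a, stdNormalPdf v

/-! Standardize: `Z = σ U + m` with `U ~ N(0,1)`, so `(zmin - Z)⁺ = σ (a - U)⁺` where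
`a = (zmin - m) / σ`. Then `E (a - U)⁺ = ∫_{u ≤ a} (a - u) φ u du = a Φ a + φ a`, because `-φ`
is an antiderivative of `u φ u`. -/

open Filter Topology Set

lemma stdNormalPdf_eq_gaussianPDFReal : stdNormalPdf = gaussianPDFReal 0 1 := by
  ext v
  simp [stdNormalPdf, gaussianPDFReal]

lemma integrable_stdNormalPdf : Integrable stdNormalPdf :=
  stdNormalPdf_eq_gaussianPDFReal ▸ integrable_gaussianPDFReal 0 1

lemma integrable_mul_stdNormalPdf : Integrable fun v => v * stdNormalPdf v := by
  refine ((integrable_mul_exp_neg_mul_sq (b := 1 / 2) (by norm_num)).const_mul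
    (√(2 * π))⁻¹).congr (ae_of_all _ fun v => ?_)
  simp only [stdNormalPdf]
  ring_nf

lemma hasDerivAt_stdNormalPdf (v : ℝ) :
    HasDerivAt stdNormalPdf (-v * stdNormalPdf v) v := by
  have h := (((hasDerivAt_pow 2 v).fun_neg.div_const 2).exp).const_mul (√(2 * π))⁻¹
  refine h.congr_deriv ?_
  simp only [stdNormalPdf]
  push_cast
  ring

lemma tendsto_stdNormalPdf_atBot : Tendsto stdNormalPdf atBot (𝓝 0) := by
  have hsq : Tendsto (fun v : ℝ => v ^ 2) atBot atTop := by
    simpa only [Function.comp_def, sq_abs] using (tendsto_pow_atTop two_ne_zero).comp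
      (tendsto_abs_atBot_atTop : Tendsto (abs : ℝ → ℝ) atBot atTop)
  have hexp : Tendsto (fun v : ℝ => exp (-v ^ 2 / 2)) atBot (𝓝 0) :=
    tendsto_exp_comp_nhds_zero.mpr ((tendsto_neg_atTop_atBot.comp hsq).atBot_div_const two_pos)
  have h := hexp.const_mul (√(2 * π))⁻¹
  rwa [mul_zero] at h

lemma integral_Iic_mul_stdNormalPdf (a : ℝ) :
    ∫ v in Iic a, v * stdNormalPdf v = -stdNormalPdf a := by
  have h := integral_Iic_of_hasDerivAt_of_tendsto' (f := fun v => -stdNormalPdf v)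
    (f' := fun v => v * stdNormalPdf v) (a := a)
    (fun v _ => (hasDerivAt_stdNormalPdf v).neg.congr_deriv (by ring))
    integrable_mul_stdNormalPdf.integrableOn tendsto_stdNormalPdf_atBot.neg
  rwa [neg_zero, sub_zero] at h

lemma integral_max_sub_zero_gaussianReal_zero_one (a : ℝ) :
    ∫ u, max (a - u) 0 ∂gaussianReal 0 1 = a * stdNormalCdf a + stdNormalPdf a := by
  have hint : (fun u => gaussianPDFReal 0 1 u • max (a - u) 0)
      = (Iic a).indicator fun u => a * stdNormalPdf u - u * stdNormalPdf u := by
    ext u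
    rw [← stdNormalPdf_eq_gaussianPDFReal, smul_eq_mul]
    by_cases hu : u ≤ a
    · rw [indicator_of_mem (mem_Iic.mpr hu), max_eq_left (sub_nonneg.mpr hu)]
      ring
    · rw [indicator_of_notMem (by simpa using hu), max_eq_right (by linarith [not_le.mp hu]),
        mul_zero]
  rw [integral_gaussianReal_eq_integral_smul one_ne_zero, hint,
    integral_indicator measurableSet_Iic,
    integral_sub (integrable_stdNormalPdf.const_mul a).integrableOn
      integrable_mul_stdNormalPdf.integrableOn,
    integral_const_mul, integral_Iic_mul_stdNormalPdf, stdNormalCdf, sub_neg_eq_add]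

lemma gaussianReal_eq_map_const_mul_add (m σ : ℝ) :
    gaussianReal m (σ ^ 2).toNNReal = (gaussianReal 0 1).map fun u => σ * u + m := by
  have hcomp : (fun u : ℝ => σ * u + m) = (· + m) ∘ (σ * ·) := rfl
  rw [hcomp, ← Measure.map_map (by fun_prop) (by fun_prop), gaussianReal_map_const_mul,
    gaussianReal_map_add_const, mul_zero, zero_add, mul_one, Real.toNNReal_of_nonneg (sq_nonneg σ)]

theorem stmt_2 (m σ zmin : ℝ) (hσ : 0 < σ) :
    ∫ z, max (zmin - z) 0 ∂(gaussianReal m (Real.toNNReal (σ ^ 2)))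
      = (zmin - m) * stdNormalCdf ((zmin - m) / σ)
        + σ * stdNormalPdf ((zmin - m) / σ) := by
  set a := (zmin - m) / σ
  have hσa : σ * a = zmin - m := mul_div_cancel₀ _ hσ.ne'
  have hscale (u : ℝ) : max (zmin - (σ * u + m)) 0 = σ * max (a - u) 0 := by
    rw [mul_max_of_nonneg _ _ hσ.le, mul_zero, mul_sub, hσa]
    ring_nf
  have hcont : Continuous fun z => max (zmin - z) 0 := by fun_prop
  rw [gaussianReal_eq_map_const_mul_add, integral_map (by fun_prop) hcont.aestronglyMeasurable]
  simp only [hscale]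
  rw [integral_const_mul, integral_max_sub_zero_gaussianReal_zero_one, mul_add, ← mul_assoc, hσa]
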